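/- Let V be a separable Hilbert space and a : V × V → 𝕂 a continuous sesquilinear form. Then a is essentially coercive if and only if there exist a Hilbert space H, a compact operator J : V → H, and α > 0 such that |a(u,u)| + ‖Ju‖²_H ≥ α‖u‖²_V for all u ∈ V. -/

import Mathlib

/-!
If `a` is essentially coercive and no compact `J` works, take for `J` the orthogonal projection
`P n` onto the span of the first `n` vectors of a dense sequence and `α = 1 / (n + 1)`: its failure
gives unit vectors `w n` with `a (w n) (w n) → 0` and `P n (w n) → 0`. Since `P n → id` strongly,
`w n ⇀ 0`, contradicting `‖w n‖ = 1`. Conversely, a compact `J` maps weakly null sequences to norm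
null ones, so `α ‖u n‖² ≤ ‖a (u n) (u n)‖ + ‖J (u n)‖² → 0`.
-/

open Filter Topology
open scoped InnerProductSpace

section Normed

variable {𝕜 : Type*} [RCLike 𝕜] {E : Type*} [NormedAddCommGroup E] [NormedSpace 𝕜 E]
  {F : Type*} [NormedAddCommGroup F] [NormedSpace 𝕜 F]

def IsEssentiallyCoercive (a : E →L[𝕜] E →L[𝕜] 𝕜) : Prop :=
  ∀ u : ℕ → E, (∀ f : StrongDual 𝕜 E, Tendsto (fun n => f (u n)) atTop (𝓝 0)) →
    Tendsto (fun n => a (u n) (u n)) atTop (𝓝 0) → Tendsto (fun n => ‖u n‖) atTop (𝓝 0)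

/-- Banach–Steinhaus, applied to the images of `u n` in the bidual. -/
theorem exists_norm_le_of_forall_dual_tendsto {u : ℕ → E}
    (hu : ∀ f : StrongDual 𝕜 E, Tendsto (fun n => f (u n)) atTop (𝓝 0)) :
    ∃ C, ∀ n, ‖u n‖ ≤ C := by
  obtain ⟨C, hC⟩ := banach_steinhaus (g := fun n => NormedSpace.inclusionInDoubleDual 𝕜 E (u n))
    fun f => let ⟨C, hC⟩ := (hu f).norm.bddAbove_range; ⟨C, fun n => hC ⟨n, rfl⟩⟩
  exact ⟨C, fun n => (NormedSpace.inclusionInDoubleDualLi 𝕜).norm_map (u n) ▸ hC n⟩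

/-- Every cluster point of the sequence is killed by all functionals, hence is `0`. -/
theorem tendsto_zero_of_forall_dual_of_isCompact {x : ℕ → E} {K : Set E} (hK : IsCompact K)
    (hxK : ∀ n, x n ∈ K) (hx : ∀ f : StrongDual 𝕜 E, Tendsto (fun n => f (x n)) atTop (𝓝 0)) :
    Tendsto x atTop (𝓝 0) := by
  refine tendsto_of_subseq_tendsto fun ns hns => ?_
  obtain ⟨y, -, φ, hφ, hy⟩ := hK.tendsto_subseq fun k => hxK (ns k)
  suffices y = 0 from ⟨φ, this ▸ hy⟩
  refine SeparatingDual.eq_zero_of_forall_dual_eq_zero (R := 𝕜) fun f => ?_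
  exact tendsto_nhds_unique ((f.continuous.tendsto y).comp hy)
    ((hx f).comp (hns.comp hφ.tendsto_atTop))

theorem IsCompactOperator.tendsto_zero_of_forall_dual {J : E →L[𝕜] F} (hJ : IsCompactOperator J)
    {u : ℕ → E} (hu : ∀ f : StrongDual 𝕜 E, Tendsto (fun n => f (u n)) atTop (𝓝 0)) :
    Tendsto (fun n => J (u n)) atTop (𝓝 0) := by
  obtain ⟨C, hC⟩ := exists_norm_le_of_forall_dual_tendsto hu
  refine tendsto_zero_of_forall_dual_of_isCompact (𝕜 := 𝕜)
    (hJ.isCompact_closure_image_closedBall (f := (J : E →ₗ[𝕜] F)) C)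
    (fun n => subset_closure ⟨u n, mem_closedBall_zero_iff.2 (hC n), rfl⟩) fun f => hu (f.comp J)

theorem isEssentiallyCoercive_of_isCompactOperator {a : E →L[𝕜] E →L[𝕜] 𝕜} {J : E →L[𝕜] F}
    (hJ : IsCompactOperator J) {α : ℝ} (hα : 0 < α)
    (h : ∀ u, α * ‖u‖ ^ 2 ≤ ‖a u u‖ + ‖J u‖ ^ 2) : IsEssentiallyCoercive a := by
  intro u hu hau
  have hrhs : Tendsto (fun n => ‖a (u n) (u n)‖ + ‖J (u n)‖ ^ 2) atTop (𝓝 0) := by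
    simpa using hau.norm.add ((hJ.tendsto_zero_of_forall_dual hu).norm.pow 2)
  have hsq : Tendsto (fun n => ‖u n‖ ^ 2) atTop (𝓝 0) := by
    simpa [hα.ne'] using
      (squeeze_zero (fun n => by positivity) (fun n => h (u n)) hrhs).const_mul α⁻¹
  simpa using hsq.sqrt

theorem mul_norm_sq_le_of_forall_norm_eq_one {q : E → ℝ}
    (hq : ∀ (c : 𝕜) u, q (c • u) = ‖c‖ ^ 2 * q u) {α : ℝ} (h : ∀ u, ‖u‖ = 1 → α ≤ q u) (u : E) :
    α * ‖u‖ ^ 2 ≤ q u := by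
  rcases eq_or_ne u 0 with rfl | hu
  · simpa using (hq 0 0).ge
  have hu' : ‖u‖ ≠ 0 := norm_ne_zero_iff.2 hu
  have hunit : ‖(‖u‖⁻¹ : 𝕜) • u‖ = 1 := by
    rw [norm_smul, norm_inv, RCLike.norm_ofReal, abs_norm, inv_mul_cancel₀ hu']
  calc α * ‖u‖ ^ 2 ≤ q ((‖u‖⁻¹ : 𝕜) • u) * ‖u‖ ^ 2 := by gcongr; exact h _ hunit
    _ = q u := by
      rw [hq, norm_inv, RCLike.norm_ofReal, abs_norm]
      field_simp

end Normed

theorem RCLike.small (𝕜 : Type*) [RCLike 𝕜] : Small.{0} 𝕜 :=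
  small_of_injective (f := fun z : 𝕜 => (RCLike.re z, RCLike.im z))
    fun _ _ h => RCLike.ext (congrArg Prod.fst h) (congrArg Prod.snd h)

theorem small_of_finiteDimensional.{w} (K E : Type*) [DivisionRing K] [Small.{w} K]
    [AddCommGroup E] [Module K E] [FiniteDimensional K E] : Small.{w} E :=
  small_of_injective (Module.finBasis K E).equivFun.injective

section InnerProduct

variable {𝕜 : Type*} [RCLike 𝕜] {E : Type*} [NormedAddCommGroup E] [InnerProductSpace 𝕜 E]

variable (𝕜 E) in
/-- `Shrink` moves `E` down to `Type`, where the theorem looks for `H`. -/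
theorem exists_linearIsometryEquiv_of_finiteDimensional [FiniteDimensional 𝕜 E] :
    ∃ (H : Type) (_ : NormedAddCommGroup H) (_ : InnerProductSpace 𝕜 H),
      Nonempty (E ≃ₗᵢ[𝕜] H) := by
  have := RCLike.small 𝕜
  have := small_of_finiteDimensional.{0} 𝕜 E
  let e := Shrink.linearEquiv 𝕜 E
  let := NormedAddCommGroup.induced _ _ e e.injective
  exact ⟨Shrink E, _, InnerProductSpace.induced e,
    ⟨{ e.symm with norm_map' := fun x => congrArg norm (e.apply_symm_apply x) }⟩⟩

theorem exists_isCompactOperator_norm_eq {V : Type*} [NormedAddCommGroup V] [NormedSpace 𝕜 V]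
    [FiniteDimensional 𝕜 E] (T : V →L[𝕜] E) :
    ∃ (H : Type) (_ : NormedAddCommGroup H) (_ : InnerProductSpace 𝕜 H) (_ : CompleteSpace H)
      (J : V →L[𝕜] H), IsCompactOperator J ∧ ∀ u, ‖J u‖ = ‖T u‖ := by
  obtain ⟨H, _, _, ⟨e⟩⟩ := exists_linearIsometryEquiv_of_finiteDimensional 𝕜 E
  have : FiniteDimensional 𝕜 H := e.toLinearEquiv.finiteDimensional
  have : ProperSpace H := FiniteDimensional.proper_rclike 𝕜 H
  exact ⟨H, _, _, FiniteDimensional.complete 𝕜 H,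
    e.toContinuousLinearEquiv.toContinuousLinearMap.comp T,
    isCompactOperator_of_locallyCompactSpace_dom _, fun u => e.norm_map (T u)⟩

/-- Split `⟪x, w⟫ = ⟪x, P w⟫ + ⟪x - P x, w⟫`, using that the projection `P` is self-adjoint. -/
theorem tendsto_inner_zero_of_tendsto_starProjection {U : ℕ → Submodule 𝕜 E}
    [∀ n, (U n).HasOrthogonalProjection]
    (hU : ∀ x, Tendsto (fun n => (U n).starProjection x) atTop (𝓝 x)) {w : ℕ → E} {C : ℝ}
    (hw : ∀ n, ‖w n‖ ≤ C) (hUw : Tendsto (fun n => (U n).starProjection (w n)) atTop (𝓝 0))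
    (x : E) : Tendsto (fun n => ⟪x, w n⟫_𝕜) atTop (𝓝 0) := by
  have hsplit : ∀ n, ⟪x, w n⟫_𝕜 =
      ⟪x, (U n).starProjection (w n)⟫_𝕜 + ⟪x - (U n).starProjection x, w n⟫_𝕜 := fun n => by
    rw [inner_sub_left, Submodule.inner_starProjection_left_eq_right, add_sub_cancel]
  have hbound : ∀ n, ‖⟪x, w n⟫_𝕜‖ ≤
      ‖x‖ * ‖(U n).starProjection (w n)‖ + ‖x - (U n).starProjection x‖ * C := fun n => by
    rw [hsplit]
    refine (norm_add_le _ _).trans (add_le_add (norm_inner_le_norm _ _) ?_)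
    exact (norm_inner_le_norm _ _).trans (mul_le_mul_of_nonneg_left (hw n) (norm_nonneg _))
  have hx : Tendsto (fun n => ‖x - (U n).starProjection x‖) atTop (𝓝 0) := by
    simpa using ((hU x).const_sub x).norm
  refine squeeze_zero_norm hbound ?_
  simpa using (hUw.norm.const_mul ‖x‖).add (hx.mul_const C)

variable (𝕜 E) in
noncomputable def denseSeqSpan [TopologicalSpace.SeparableSpace E] (n : ℕ) : Submodule 𝕜 E :=
  Submodule.span 𝕜 (TopologicalSpace.denseSeq E '' Set.Iio n)

variable [TopologicalSpace.SeparableSpace E]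

instance (n : ℕ) : FiniteDimensional 𝕜 (denseSeqSpan 𝕜 E n) :=
  FiniteDimensional.span_of_finite 𝕜 ((Set.finite_Iio n).image _)

instance (n : ℕ) : (denseSeqSpan 𝕜 E n).HasOrthogonalProjection :=
  have : CompleteSpace (denseSeqSpan 𝕜 E n) := FiniteDimensional.complete 𝕜 _
  inferInstance

theorem tendsto_starProjection_denseSeqSpan (x : E) :
    Tendsto (fun n => (denseSeqSpan 𝕜 E n).starProjection x) atTop (𝓝 x) := by
  refine Submodule.starProjection_tendsto_self _ ?_ x ?_
  · exact fun m n hmn => Submodule.span_mono (Set.image_mono (Set.Iio_subset_Iio hmn))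
  · intro y _
    simp only [denseSeqSpan]
    rw [← Submodule.span_iUnion, ← Set.image_iUnion, Set.iUnion_Iio, Set.image_univ,
      ← SetLike.mem_coe, Submodule.topologicalClosure_coe]
    exact closure_mono Submodule.subset_span (TopologicalSpace.denseRange_denseSeq E y)

theorem IsEssentiallyCoercive.exists_isCompactOperator [CompleteSpace E]
    {a : E →L[𝕜] E →L[𝕜] 𝕜} (ha : IsEssentiallyCoercive a) :
    ∃ (H : Type) (_ : NormedAddCommGroup H) (_ : InnerProductSpace 𝕜 H) (_ : CompleteSpace H)
      (J : E →L[𝕜] H) (α : ℝ), 0 < α ∧ IsCompactOperator J ∧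
        ∀ u : E, α * ‖u‖ ^ 2 ≤ ‖a u u‖ + ‖J u‖ ^ 2 := by
  by_contra hne
  set P := fun n => (denseSeqSpan 𝕜 E n).starProjection
  have hbad : ∀ n : ℕ, ∃ w : E, ‖w‖ = 1 ∧ ‖a w w‖ + ‖P n w‖ ^ 2 < 1 / (n + 1) := by
    intro n
    by_contra! hn
    obtain ⟨H, _, _, hH, J, hJ, hJP⟩ :=
      exists_isCompactOperator_norm_eq (denseSeqSpan 𝕜 E n).orthogonalProjectionOnto
    refine hne ⟨H, _, _, hH, J, 1 / (n + 1), by positivity, hJ,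
      mul_norm_sq_le_of_forall_norm_eq_one (𝕜 := 𝕜) (q := fun u => ‖a u u‖ + ‖J u‖ ^ 2)
        (fun c u => ?_) fun u hu => ?_⟩
    · simp only [map_smul, smul_apply, smul_eq_mul, norm_smul, norm_mul]
      ring
    · rw [hJP]
      exact hn u hu
  choose w hw1 hw using hbad
  have hsmall : ∀ n, ‖a (w n) (w n)‖ < 1 / (n + 1) ∧ ‖P n (w n)‖ ^ 2 < 1 / (n + 1) := fun n =>
    ⟨by linarith [hw n, sq_nonneg ‖P n (w n)‖], by linarith [hw n, norm_nonneg (a (w n) (w n))]⟩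
  have hlim : Tendsto (fun n : ℕ => 1 / ((n : ℝ) + 1)) atTop (𝓝 0) :=
    tendsto_one_div_add_atTop_nhds_zero_nat
  have haw : Tendsto (fun n => a (w n) (w n)) atTop (𝓝 0) :=
    squeeze_zero_norm (fun n => (hsmall n).1.le) hlim
  have hPw : Tendsto (fun n => P n (w n)) atTop (𝓝 0) := by
    rw [tendsto_zero_iff_norm_tendsto_zero]
    have := squeeze_zero (fun n => by positivity) (fun n => (hsmall n).2.le) hlim
    simpa using this.sqrt
  have hweak : ∀ f : StrongDual 𝕜 E, Tendsto (fun n => f (w n)) atTop (𝓝 0) := by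
    intro f
    obtain ⟨x, rfl⟩ := (InnerProductSpace.toDual 𝕜 E).surjective f
    simpa using tendsto_inner_zero_of_tendsto_starProjection tendsto_starProjection_denseSeqSpan
      (fun n => (hw1 n).le) hPw x
  simpa [hw1] using ha w hweak haw

end InnerProduct

theorem stmt6_general {𝕜 : Type*} [RCLike 𝕜]
    {V : Type*} [NormedAddCommGroup V] [InnerProductSpace 𝕜 V] [CompleteSpace V]
    [TopologicalSpace.SeparableSpace V]
    (a : V →L[𝕜] V →L[𝕜] 𝕜) :
    (∀ u : ℕ → V,
        (∀ f : StrongDual 𝕜 V, Tendsto (fun n => f (u n)) atTop (nhds 0)) →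
        Tendsto (fun n => a (u n) (u n)) atTop (nhds 0) →
        Tendsto (fun n => ‖u n‖) atTop (nhds 0)) ↔
    (∃ (H : Type) (_ : NormedAddCommGroup H) (_ : InnerProductSpace 𝕜 H)
        (_ : CompleteSpace H) (J : V →L[𝕜] H) (α : ℝ),
        0 < α ∧ IsCompactOperator J ∧
        ∀ u : V, α * ‖u‖ ^ 2 ≤ ‖a u u‖ + ‖J u‖ ^ 2) :=
  ⟨IsEssentiallyCoercive.exists_isCompactOperator,
    fun ⟨_, _, _, _, _, _, hα, hJ, h⟩ => isEssentiallyCoercive_of_isCompactOperator hJ hα h⟩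

/-- a continuous sesquilinear form on a separable Hilbert space is
essentially coercive iff `|a(u,u)| + ‖Ju‖² ≥ α‖u‖²` for some compact operator
`J : V → H` into a Hilbert space `H` and some `α > 0`. -/
theorem stmt6 {𝕜 : Type*} [RCLike 𝕜]
    {V : Type*} [NormedAddCommGroup V] [InnerProductSpace 𝕜 V] [CompleteSpace V]
    [TopologicalSpace.SeparableSpace V]
    (a : V →L[𝕜] V →L[𝕜] 𝕜) (M : ℝ)
    (hbound : ∀ u v, ‖a u v‖ ≤ M * ‖u‖ * ‖v‖) :
    (∀ u : ℕ → V,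
        (∀ f : StrongDual 𝕜 V, Tendsto (fun n => f (u n)) atTop (nhds 0)) →
        Tendsto (fun n => a (u n) (u n)) atTop (nhds 0) →
        Tendsto (fun n => ‖u n‖) atTop (nhds 0)) ↔
    (∃ (H : Type) (_ : NormedAddCommGroup H) (_ : InnerProductSpace 𝕜 H)
        (_ : CompleteSpace H) (J : V →L[𝕜] H) (α : ℝ),
        0 < α ∧ IsCompactOperator J ∧
        ∀ u : V, α * ‖u‖ ^ 2 ≤ ‖a u u‖ + ‖J u‖ ^ 2) :=
  stmt6_general a
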